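/- arXiv:0906.3757 — 3 statements merged into one kernel-verified Lean document; each statement's English description precedes it below -/
import Mathlib

section
/- Fix s ∈ (0,1). There exists r ∈ (0,1) such that for all t ∈ [0,1], the pair of equations 1−r+2r√s = √(1−t+2st+2√(st−st²+s²t²)) and 1−r = √(1−t+2st−2√(st−st²+s²t²)) does not hold simultaneously. -/
theorem stmt_12 (s : ℝ) (hs : s ∈ Set.Ioo (0:ℝ) 1) :
    ∃ r ∈ Set.Ioo (0:ℝ) 1, ∀ t ∈ Set.Icc (0:ℝ) 1,
      ¬ ((1 - r + 2*r*Real.sqrt s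
            = Real.sqrt (1 - t + 2*s*t + 2 * Real.sqrt (s*t - s*t^2 + s^2*t^2))) ∧
         (1 - r
            = Real.sqrt (1 - t + 2*s*t - 2 * Real.sqrt (s*t - s*t^2 + s^2*t^2)))) := by
  obtain ⟨hs0, hs1⟩ := hs
  refine ⟨1/2, by norm_num, ?_⟩
  rintro t ⟨ht0, ht1⟩ ⟨h1, h2⟩
  set u := Real.sqrt s with hu
  have hu2 : u^2 = s := Real.sq_sqrt hs0.le
  have hu0 : 0 ≤ u := Real.sqrt_nonneg s
  have hup : 0 < u := Real.sqrt_pos.mpr hs0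
  have hu1 : u < 1 := by nlinarith
  set D := s*t - s*t^2 + s^2*t^2 with hD
  have hD0 : 0 ≤ D := by rw [hD]; nlinarith [mul_nonneg (mul_nonneg hs0.le ht0) (sub_nonneg.mpr ht1), sq_nonneg (s*t)]
  set v := Real.sqrt D with hv
  have hv2 : v^2 = D := Real.sq_sqrt hD0
  have hv0 : 0 ≤ v := Real.sqrt_nonneg D
  have hXnn : 0 ≤ 1 - t + 2*s*t - 2*v := by
    by_contra h
    push_neg at h
    rw [Real.sqrt_eq_zero'.mpr h.le] at h2
    norm_num at h2
  have hX : 1 - t + 2*s*t - 2*v = 1/4 := by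
    have h := Real.sq_sqrt hXnn
    rw [← h2] at h
    linear_combination -h
  have hYnn : 0 ≤ 1 - t + 2*s*t + 2*v := by linarith
  have hY : 1 - t + 2*s*t + 2*v = 1/4 + u + u^2 := by
    have h := Real.sq_sqrt hYnn
    rw [← h1] at h
    linear_combination -h
  have h1t2 : (1-t)^2 = (1/4+u/2)^2 := by
    linear_combination (1 - t + 2*s*t + 2*v) * hX + (1/4)*hY + 4*hv2 + 4*hD
  have h1t : 1 - t = 1/4 + u/2 := by
    have hz : (1 - t - (1/4+u/2)) * (1 - t + (1/4+u/2)) = 0 := by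
      linear_combination h1t2
    rcases mul_eq_zero.mp hz with h | h
    · linarith
    · linarith
  have hfin : u^2 - u^3 = 0 := by
    linear_combination (1/2)*hX + (1/2)*hY + (2*s-1)*h1t + (3/2 - u)*hu2
  nlinarith [mul_pos (mul_pos hup hup) (sub_pos.mpr hu1)]
end

section
/- Let p, q be orthogonal projections in M_{2d}(ℂ) each of normalized trace 1/2. Then ℂ^{2d} decomposes as an orthogonal direct sum of d two-dimensional subspaces each invariant under both p and q. -/
/-!
For idempotents `T, S` the square `(T - S) ^ 2` commutes with both. Over an algebraically closed
field it has an eigenvector `y`, and then `x = T y` (or `x = y` if `T y = 0`) is an eigenvector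
of both `(T - S) ^ 2` and `T`; the identity `(T - S) ^ 2 = T + S - T S - S T` shows that
`span {x, S x}` is invariant under `T` and `S`. So every nonzero common invariant subspace contains
one of dimension `1` or `2`. When `T, S` are symmetric, orthogonal complements of common invariant
subspaces are invariant, so two invariant lines can be joined into an invariant plane, and planes
can be split off one by one from a common invariant subspace of dimension `2 d`.
-/

open Module Submodule

theorem IsIdempotentElem.commute_sub_sq {R : Type*} [Ring R] {p q : R}
    (hp : IsIdempotentElem p) (hq : IsIdempotentElem q) : Commute p ((p - q) ^ 2) := by
  simp only [Commute, SemiconjBy, sq, mul_sub, sub_mul, ← mul_assoc, hp.eq]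
  simp only [mul_assoc, hp.eq, hq.eq]
  abel

theorem iSup_fin_succ {α : Type*} [CompleteLattice α] {n : ℕ} (f : Fin (n + 1) → α) :
    ⨆ i, f i = f 0 ⊔ ⨆ i : Fin n, f i.succ :=
  le_antisymm
    (iSup_le <| Fin.cases le_sup_left fun i => le_sup_of_le_right (le_iSup (f ∘ Fin.succ) i))
    (sup_le (le_iSup f 0) (iSup_le fun i => le_iSup f i.succ))

theorem Matrix.isIdempotentElem_toEuclideanLin {𝕜 n : Type*} [RCLike 𝕜] [Fintype n]
    [DecidableEq n] {A : Matrix n n 𝕜} (hA : IsIdempotentElem A) :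
    IsIdempotentElem (toEuclideanLin A) := by
  rw [← coe_toEuclideanCLM_eq_toEuclideanLin]
  exact ContinuousLinearMap.isIdempotentElem_toLinearMap_iff.2 (hA.map toEuclideanCLM)

namespace Module.End

section Algebraic

variable {K V : Type*} [Field K] [AddCommGroup V] [Module K V] {T S : End K V}

theorem isIdempotentElem_restrict (hT : IsIdempotentElem T) {U : Submodule K V}
    (hU : U ∈ T.invtSubmodule) : IsIdempotentElem (T.restrict hU) :=
  LinearMap.ext fun x => Subtype.ext (LinearMap.congr_fun hT x)

theorem span_pair_mem_invtSubmodule (hT : IsIdempotentElem T) (hS : IsIdempotentElem S)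
    {x : V} {μ c : K} (hx : ((T - S) ^ 2) x = μ • x) (hTx : T x = c • x) :
    span K {x, S x} ∈ T.invtSubmodule ∧ span K {x, S x} ∈ S.invtSubmodule := by
  have hTT := LinearMap.congr_fun hT
  have hSS := LinearMap.congr_fun hS
  simp only [mul_apply] at hTT hSS
  have hTSx : T (S x) = (c - μ) • x + (1 - c) • S x := by
    -- `T (T x)` has to collapse before `T x = c • x` is used, as `c ^ 2 = c` is not available
    simp only [sq, mul_apply, LinearMap.sub_apply, map_sub, hTT, hSS] at hx
    simp only [hTx, map_smul] at hx
    linear_combination (norm := module) -hx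
  have key (f : End K V) (h₁ : f x ∈ span K {x, S x}) (h₂ : f (S x) ∈ span K {x, S x}) :
      span K {x, S x} ∈ f.invtSubmodule :=
    span_le.2 (Set.insert_subset_iff.2 ⟨h₁, Set.singleton_subset_iff.2 h₂⟩)
  refine ⟨key T ?_ ?_, key S ?_ ?_⟩
  · exact mem_span_pair.2 ⟨c, 0, by rw [hTx, zero_smul, add_zero]⟩
  · exact mem_span_pair.2 ⟨_, _, hTSx.symm⟩
  · exact subset_span (by simp)
  · rw [hSS]
    exact subset_span (by simp)

theorem exists_ne_bot_finrank_le_two_mem_invtSubmodule [IsAlgClosed K]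
    [FiniteDimensional K V] [Nontrivial V] (hT : IsIdempotentElem T) (hS : IsIdempotentElem S) :
    ∃ W : Submodule K V, W ≠ ⊥ ∧ finrank K W ≤ 2 ∧ W ∈ T.invtSubmodule ∧ W ∈ S.invtSubmodule := by
  obtain ⟨μ, hμ⟩ := ((T - S) ^ 2).exists_eigenvalue
  obtain ⟨y, hy⟩ := hμ.exists_hasEigenvector
  obtain ⟨x, c, hx0, hx, hTx⟩ :
      ∃ (x : V) (c : K), x ≠ 0 ∧ ((T - S) ^ 2) x = μ • x ∧ T x = c • x := by
    by_cases hTy : T y = 0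
    · exact ⟨y, 0, hy.2, hy.apply_eq_smul, by rw [hTy, zero_smul]⟩
    · refine ⟨T y, 1, hTy, ?_, by rw [one_smul, ← mul_apply, hT.eq]⟩
      rw [← mul_apply, ← (hT.commute_sub_sq hS).eq, mul_apply, hy.apply_eq_smul, map_smul]
  refine ⟨span K {x, S x}, ?_, ?_, span_pair_mem_invtSubmodule hT hS hx hTx⟩
  · exact (Submodule.ne_bot_iff _).2 ⟨x, subset_span (by simp), hx0⟩
  · classical
    exact (finrank_span_le_card _).trans (by simpa using Finset.card_le_two)

theorem exists_le_ne_bot_finrank_le_two_mem_invtSubmodule [IsAlgClosed K]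
    [FiniteDimensional K V] (hT : IsIdempotentElem T) (hS : IsIdempotentElem S)
    {U : Submodule K V} (hU : U ≠ ⊥) (hUT : U ∈ T.invtSubmodule) (hUS : U ∈ S.invtSubmodule) :
    ∃ W ≤ U, W ≠ ⊥ ∧ finrank K W ≤ 2 ∧ W ∈ T.invtSubmodule ∧ W ∈ S.invtSubmodule := by
  have : Nontrivial U := nontrivial_iff_ne_bot.2 hU
  obtain ⟨W, hW0, hW2, hWT, hWS⟩ := exists_ne_bot_finrank_le_two_mem_invtSubmodule
    (isIdempotentElem_restrict hT hUT) (isIdempotentElem_restrict hS hUS)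
  refine ⟨W.map U.subtype, map_subtype_le _ _, ?_, by rwa [finrank_map_subtype_eq],
    invtSubmodule.map_subtype_mem_of_mem_invtSubmodule _ hUT hWT,
    invtSubmodule.map_subtype_mem_of_mem_invtSubmodule _ hUS hWS⟩
  simpa using (map_injective_of_injective U.injective_subtype).ne hW0

end Algebraic

section InnerProduct

variable {E : Type*} [NormedAddCommGroup E] [InnerProductSpace ℂ E] [FiniteDimensional ℂ E]
  {T S : End ℂ E}

theorem exists_le_finrank_eq_two_mem_invtSubmodule (hT : T.IsSymmetric) (hT2 : IsIdempotentElem T)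
    (hS : S.IsSymmetric) (hS2 : IsIdempotentElem S) {U : Submodule ℂ E} (hU : 2 ≤ finrank ℂ U)
    (hUT : U ∈ T.invtSubmodule) (hUS : U ∈ S.invtSubmodule) :
    ∃ W ≤ U, finrank ℂ W = 2 ∧ W ∈ T.invtSubmodule ∧ W ∈ S.invtSubmodule := by
  obtain ⟨W₁, hW₁U, hW₁0, hW₁2, hW₁T, hW₁S⟩ :=
    exists_le_ne_bot_finrank_le_two_mem_invtSubmodule hT2 hS2
      (one_le_finrank_iff.1 (by omega)) hUT hUS
  obtain h₁ | h₁ : finrank ℂ W₁ = 2 ∨ finrank ℂ W₁ = 1 := by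
    have := one_le_finrank_iff.2 hW₁0
    omega
  · exact ⟨W₁, hW₁U, h₁, hW₁T, hW₁S⟩
  have hU' := finrank_add_inf_finrank_orthogonal hW₁U
  obtain ⟨W₂, hW₂U', hW₂0, hW₂2, hW₂T, hW₂S⟩ :=
    exists_le_ne_bot_finrank_le_two_mem_invtSubmodule hT2 hS2 (one_le_finrank_iff.1 (by omega))
      (invtSubmodule.inf_mem (hT.orthogonalComplement_mem_invtSubmodule hW₁T) hUT)
      (invtSubmodule.inf_mem (hS.orthogonalComplement_mem_invtSubmodule hW₁S) hUS)
  obtain h₂ | h₂ : finrank ℂ W₂ = 2 ∨ finrank ℂ W₂ = 1 := by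
    have := one_le_finrank_iff.2 hW₂0
    omega
  · exact ⟨W₂, hW₂U'.trans inf_le_right, h₂, hW₂T, hW₂S⟩
  refine ⟨W₁ ⊔ W₂, sup_le hW₁U (hW₂U'.trans inf_le_right), ?_,
    invtSubmodule.sup_mem hW₁T hW₂T, invtSubmodule.sup_mem hW₁S hW₂S⟩
  have hdisj : W₁ ⊓ W₂ = ⊥ :=
    (W₁.orthogonal_disjoint.mono_right (hW₂U'.trans inf_le_left)).eq_bot
  have := finrank_sup_add_finrank_inf_eq W₁ W₂
  rw [hdisj, finrank_bot] at this
  omega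

theorem exists_pairwise_isOrtho_finrank_eq_two_iSup_eq (hT : T.IsSymmetric)
    (hT2 : IsIdempotentElem T) (hS : S.IsSymmetric) (hS2 : IsIdempotentElem S) :
    ∀ (d : ℕ) {U : Submodule ℂ E}, finrank ℂ U = 2 * d → U ∈ T.invtSubmodule →
      U ∈ S.invtSubmodule → ∃ V : Fin d → Submodule ℂ E, (∀ i, finrank ℂ (V i) = 2) ∧
        Pairwise (fun i j => V i ⟂ V j) ∧ ⨆ i, V i = U ∧
        ∀ i, V i ∈ T.invtSubmodule ∧ V i ∈ S.invtSubmodule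
  | 0, U, hU, _, _ =>
    ⟨Fin.elim0, fun i => i.elim0, fun i => i.elim0, by simp [finrank_eq_zero.1 hU],
      fun i => i.elim0⟩
  | d + 1, U, hU, hUT, hUS => by
    obtain ⟨W, hWU, hW2, hWT, hWS⟩ :=
      exists_le_finrank_eq_two_mem_invtSubmodule hT hT2 hS hS2 (by omega) hUT hUS
    obtain ⟨V, hV2, hVorth, hVsup, hVinv⟩ := exists_pairwise_isOrtho_finrank_eq_two_iSup_eq
      hT hT2 hS hS2 d (finrank_add_inf_finrank_orthogonal' hWU (by omega))
      (invtSubmodule.inf_mem (hT.orthogonalComplement_mem_invtSubmodule hWT) hUT)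
      (invtSubmodule.inf_mem (hS.orthogonalComplement_mem_invtSubmodule hWS) hUS)
    have hVW (i : Fin d) : V i ⟂ W := (le_iSup V i).trans (hVsup ▸ inf_le_left)
    refine ⟨Fin.cons W V, Fin.cases hW2 hV2, ?_, ?_, Fin.cases ⟨hWT, hWS⟩ hVinv⟩
    · exact pairwise_fin_succ_iff_of_isSymm.2 ⟨fun j => (hVW j).symm, hVorth⟩
    · rw [iSup_fin_succ]
      simp only [Fin.cons_zero, Fin.cons_succ, hVsup]
      exact sup_orthogonal_inf_of_hasOrthogonalProjection hWU

end InnerProduct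

end Module.End

open Matrix

theorem stmt_14_general (d : ℕ)
    (p q : Matrix (Fin (2*d)) (Fin (2*d)) ℂ)
    (hp : p.IsHermitian) (hp2 : p * p = p)
    (hq : q.IsHermitian) (hq2 : q * q = q) :
    ∃ V : Fin d → Submodule ℂ (EuclideanSpace ℂ (Fin (2*d))),
      (∀ i, Module.finrank ℂ (V i) = 2) ∧
      (∀ i j, i ≠ j → V i ≤ (V j)ᗮ) ∧
      (⨆ i, V i) = ⊤ ∧
      (∀ i, ∀ x ∈ V i, Matrix.toEuclideanLin p x ∈ V i) ∧
      (∀ i, ∀ x ∈ V i, Matrix.toEuclideanLin q x ∈ V i) := by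
  obtain ⟨V, hV2, hVorth, hVsup, hVinv⟩ :=
    Module.End.exists_pairwise_isOrtho_finrank_eq_two_iSup_eq
      (isSymmetric_toEuclideanLin_iff.2 hp) (isIdempotentElem_toEuclideanLin hp2)
      (isSymmetric_toEuclideanLin_iff.2 hq) (isIdempotentElem_toEuclideanLin hq2) d
      (by simp) (Module.End.invtSubmodule.top_mem _) (Module.End.invtSubmodule.top_mem _)
  exact ⟨V, hV2, fun i j hij => hVorth hij, hVsup, fun i => (hVinv i).1, fun i => (hVinv i).2⟩

theorem stmt_14 (d : ℕ) (hd : 0 < d)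
    (p q : Matrix (Fin (2*d)) (Fin (2*d)) ℂ)
    (hp : p.IsHermitian) (hp2 : p * p = p)
    (hq : q.IsHermitian) (hq2 : q * q = q)
    (htp : p.trace = (d : ℂ)) (htq : q.trace = (d : ℂ)) :
    ∃ V : Fin d → Submodule ℂ (EuclideanSpace ℂ (Fin (2*d))),
      (∀ i, Module.finrank ℂ (V i) = 2) ∧
      (∀ i j, i ≠ j → V i ≤ (V j)ᗮ) ∧
      (⨆ i, V i) = ⊤ ∧
      (∀ i, ∀ x ∈ V i, Matrix.toEuclideanLin p x ∈ V i) ∧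
      (∀ i, ∀ x ∈ V i, Matrix.toEuclideanLin q x ∈ V i) :=
  stmt_14_general d p q hp hp2 hq hq2
end

section
/- Any pair (p, q) of rank-one orthogonal projections on ℂ² is unitarily conjugate to the pair (p_t, e) where p_t = [[t, √(t(1−t))],[√(t(1−t)), 1−t]] and e = [[1,0],[0,0]], for some t ∈ [0,1]. -/
/-!
A rank-one projection on `ℂ²` is Hermitian with trace `1` and determinant `0`, hence of the form
`!![a, b; conj b, 1 - a]` with `|b|² = a (1 - a)`, `0 ≤ a ≤ 1`. Conjugating by the phase
`diag (exp (-i arg b), 1)`, which commutes with `e = !![1, 0; 0, 0]`, replaces `b` by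
`|b| = √(a (1 - a))`, and the real rotation with cosine `√a` carries the resulting matrix to `e`.
So first move `q` to `e` by a phase and a rotation, then straighten the image of `p` by a
second phase, which leaves `e` fixed.
-/

open Matrix Complex ComplexConjugate

namespace Matrix

variable {n : Type*} [Fintype n] [DecidableEq n]

theorem trace_eq_rank_of_isIdempotentElem {K : Type*} [Field K] {p : Matrix n n K}
    (hp : IsIdempotentElem p) : p.trace = p.rank := by
  have hlin : IsIdempotentElem (toLin' p) := hp.map (toLinAlgEquiv' (R := K))
  rw [← trace_toLin'_eq, (LinearMap.IsIdempotentElem.isProj_range _ hlin).trace, rank,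
    toLin'_apply']

theorem det_eq_zero_of_rank_lt_card {R : Type*} [CommRing R] [IsDomain R] {A : Matrix n n R}
    (h : A.rank < Fintype.card n) : A.det = 0 := by
  by_contra hA
  exact h.ne (rank_of_det_ne_zero hA)

variable {R : Type*} [CommRing R] [StarRing R]

theorem trace_unitary_conj {U : Matrix n n R} (hU : U ∈ unitaryGroup n R) (p : Matrix n n R) :
    (U * p * star U).trace = p.trace := by
  rw [trace_mul_cycle, mem_unitaryGroup_iff'.1 hU, Matrix.one_mul]

theorem det_unitary_conj {U : Matrix n n R} (hU : U ∈ unitaryGroup n R) (p : Matrix n n R) :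
    (U * p * star U).det = p.det := by
  rw [det_mul, det_mul, mul_right_comm, ← det_mul, mem_unitaryGroup_iff.1 hU, det_one, one_mul]

theorem star_fin_two {α : Type*} [Star α] (a b c d : α) :
    star !![a, b; c, d] = !![star a, star c; star b, star d] := by
  ext i j
  fin_cases i <;> fin_cases j <;> rfl

end Matrix

theorem conj_mul_eq_conj_conj {M : Type*} [Monoid M] [StarMul M] (a b x : M) :
    a * b * x * star (a * b) = a * (b * x * star b) * star a := by
  simp only [star_mul, mul_assoc]

theorem mem_Icc_of_normSq_eq_mul_one_sub {a : ℝ} {b : ℂ} (h : normSq b = a * (1 - a)) :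
    a ∈ Set.Icc (0 : ℝ) 1 := by
  have := normSq_nonneg b
  constructor <;> nlinarith

theorem Matrix.IsHermitian.exists_eq_fin_two_of_trace_eq_one_of_det_eq_zero
    {p : Matrix (Fin 2) (Fin 2) ℂ} (hp : p.IsHermitian) (htr : p.trace = 1) (hdet : p.det = 0) :
    ∃ a : ℝ, ∃ b : ℂ, normSq b = a * (1 - a) ∧
      p = !![(a : ℂ), b; conj b, ((1 - a : ℝ) : ℂ)] := by
  set a := (p 0 0).re
  have h00 : p 0 0 = a := (hp.coe_re_apply_self 0).symm
  have h10 : p 1 0 = conj (p 0 1) := (hp.apply 1 0).symm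
  have h11 : p 1 1 = ((1 - a : ℝ) : ℂ) := by
    rw [trace_fin_two, h00] at htr
    push_cast
    linear_combination htr
  refine ⟨a, p 0 1, ?_, ?_⟩
  · rw [det_fin_two, h00, h10, h11, mul_conj] at hdet
    have : (normSq (p 0 1) : ℂ) = ((a * (1 - a) : ℝ) : ℂ) := by
      push_cast at hdet ⊢
      linear_combination -hdet
    exact_mod_cast this
  · ext i j
    fin_cases i <;> fin_cases j <;> simp [h00, h10, h11]

noncomputable def canonicalProj (t : ℝ) : Matrix (Fin 2) (Fin 2) ℂ :=
  !![(t : ℂ), (√(t * (1 - t)) : ℝ); (√(t * (1 - t)) : ℝ), ((1 - t : ℝ) : ℂ)]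

theorem exp_neg_arg_mul_I_mul_self (b : ℂ) : exp (↑(-arg b) * I) * b = ‖b‖ :=
  calc exp (↑(-arg b) * I) * b = exp (-(arg b * I)) * (‖b‖ * exp (arg b * I)) := by
        rw [norm_mul_exp_arg_mul_I, ofReal_neg, neg_mul]
    _ = ‖b‖ := by rw [mul_left_comm, ← exp_add, neg_add_cancel, exp_zero, mul_one]

theorem exists_diagonal_unitary_conj_eq_canonicalProj {a : ℝ} {b : ℂ}
    (hb : normSq b = a * (1 - a)) :
    ∃ D ∈ unitaryGroup (Fin 2) ℂ,
      D * !![(a : ℂ), b; conj b, ((1 - a : ℝ) : ℂ)] * star D = canonicalProj a ∧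
      D * !![1, 0; 0, 0] * star D = !![1, 0; 0, 0] := by
  set ζ := exp (↑(-arg b) * I)
  have hζ : ζ * conj ζ = 1 := by
    rw [mul_conj, normSq_eq_norm_sq, norm_exp_ofReal_mul_I, one_pow, ofReal_one]
  have hζb : ζ * b = (√(a * (1 - a)) : ℝ) := by
    rw [exp_neg_arg_mul_I_mul_self, norm_def, hb]
  have hζb' : conj ζ * conj b = (√(a * (1 - a)) : ℝ) := by
    rw [← map_mul, hζb, conj_ofReal]
  refine ⟨!![ζ, 0; 0, 1], ?_, ?_, ?_⟩
  · rw [mem_unitaryGroup_iff, star_fin_two, mul_fin_two, one_fin_two]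
    simp [hζ]
  · rw [canonicalProj, star_fin_two, mul_fin_two, mul_fin_two]
    ext i j
    fin_cases i <;> fin_cases j <;> simp
    · linear_combination (a : ℂ) * hζ
    · exact hζb
    · linear_combination hζb'
  · rw [star_fin_two, mul_fin_two, mul_fin_two]
    simp [hζ]

theorem exists_unitary_conj_canonicalProj_eq {t : ℝ} (ht : t ∈ Set.Icc (0 : ℝ) 1) :
    ∃ R ∈ unitaryGroup (Fin 2) ℂ, R * canonicalProj t * star R = !![1, 0; 0, 0] := by
  set c := √t
  set s := √(1 - t)
  have hc : c ^ 2 = t := Real.sq_sqrt ht.1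
  have hs : s ^ 2 = 1 - t := Real.sq_sqrt (sub_nonneg.2 ht.2)
  have hcs : √(t * (1 - t)) = c * s := Real.sqrt_mul ht.1 _
  have hP : canonicalProj t = !![(c : ℂ) ^ 2, c * s; c * s, s ^ 2] := by
    rw [canonicalProj, hcs, ← hs, ← hc]
    push_cast
    rfl
  have hunit : (c : ℂ) ^ 2 + s ^ 2 = 1 := by
    exact_mod_cast (by linarith : c ^ 2 + s ^ 2 = 1)
  refine ⟨!![(c : ℂ), s; -s, c], ?_, ?_⟩
  · rw [mem_unitaryGroup_iff, star_fin_two, mul_fin_two, one_fin_two]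
    ext i j
    fin_cases i <;> fin_cases j <;> simp <;> grind
  · rw [hP, star_fin_two, mul_fin_two, mul_fin_two]
    ext i j
    fin_cases i <;> fin_cases j <;> simp <;> grind

theorem stmt_15 (p q : Matrix (Fin 2) (Fin 2) ℂ)
    (hp : p.IsHermitian) (hp2 : p * p = p) (hpr : p.rank = 1)
    (hq : q.IsHermitian) (hq2 : q * q = q) (hqr : q.rank = 1) :
    ∃ t ∈ Set.Icc (0:ℝ) 1, ∃ U ∈ Matrix.unitaryGroup (Fin 2) ℂ,
      U * p * star U
        = !![(t : ℂ), (Real.sqrt (t*(1-t)) : ℝ); (Real.sqrt (t*(1-t)) : ℝ), ((1 - t : ℝ) : ℂ)] ∧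
      U * q * star U = !![1, 0; 0, 0] := by
  have htr {r : Matrix (Fin 2) (Fin 2) ℂ} (hr : IsIdempotentElem r) (hrk : r.rank = 1) :
      r.trace = 1 := by
    rw [trace_eq_rank_of_isIdempotentElem hr, hrk, Nat.cast_one]
  have hdet {r : Matrix (Fin 2) (Fin 2) ℂ} (hrk : r.rank = 1) : r.det = 0 :=
    det_eq_zero_of_rank_lt_card (by simp [hrk])
  obtain ⟨s, c, hc, rfl⟩ :=
    hq.exists_eq_fin_two_of_trace_eq_one_of_det_eq_zero (htr hq2 hqr) (hdet hqr)
  obtain ⟨D₁, hD₁, hD₁q, -⟩ := exists_diagonal_unitary_conj_eq_canonicalProj hc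
  obtain ⟨R, hR, hRe⟩ := exists_unitary_conj_canonicalProj_eq (mem_Icc_of_normSq_eq_mul_one_sub hc)
  have hV : R * D₁ ∈ unitaryGroup (Fin 2) ℂ := mul_mem hR hD₁
  have hVp : (R * D₁ * p * star (R * D₁)).IsHermitian := isHermitian_mul_mul_conjTranspose _ hp
  obtain ⟨t, b, hb, hp'⟩ := hVp.exists_eq_fin_two_of_trace_eq_one_of_det_eq_zero
    (by rw [trace_unitary_conj hV, htr hp2 hpr]) (by rw [det_unitary_conj hV, hdet hpr])
  obtain ⟨D₂, hD₂, hD₂p, hD₂e⟩ := exists_diagonal_unitary_conj_eq_canonicalProj hb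
  refine ⟨t, mem_Icc_of_normSq_eq_mul_one_sub hb, D₂ * (R * D₁), mul_mem hD₂ hV, ?_, ?_⟩
  · rw [conj_mul_eq_conj_conj, hp', hD₂p, canonicalProj]
  · rw [conj_mul_eq_conj_conj, conj_mul_eq_conj_conj R, hD₁q, hRe, hD₂e]
end
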